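/- arXiv:2505.23293 — 2 statements merged into one kernel-verified Lean document; each statement's English description precedes it below -/
import Mathlib

section
/- In an apiculate partial cube, every antipodal subgraph is gated; that is, if A is a set of vertices such that every vertex v ∈ A has an antipode v̄ ∈ A with A = [v,v̄], then for every vertex u of the graph there exists a vertex u' ∈ A such that u' ∈ [u,v] for all v ∈ A. -/
open SimpleGraph

namespace Mediangle

/-- The interval `[u,v]` in a graph: vertices on shortest `u,v`-paths. -/
def interval {V : Type*} (G : SimpleGraph V) (u v : V) : Set V :=
  {x | G.dist u x + G.dist x v = G.dist u v}

/-- A set of vertices is convex if it contains the interval between any two of its vertices. -/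
def GConvex {V : Type*} (G : SimpleGraph V) (A : Set V) : Prop :=
  ∀ x ∈ A, ∀ y ∈ A, interval G x y ⊆ A

/-- A set `A` is gated: every vertex `u` has a gate `g ∈ A` with `g ∈ [u,v]` for all `v ∈ A`. -/
def IsGated {V : Type*} (G : SimpleGraph V) (A : Set V) : Prop :=
  ∀ u : V, ∃ g ∈ A, ∀ v ∈ A, g ∈ interval G u v

/-- A set `A` is antipodal: every `v ∈ A` has an antipode `w` with `A = [v,w]`. -/
def IsAntipodalSet {V : Type*} (G : SimpleGraph V) (A : Set V) : Prop :=
  ∀ v ∈ A, ∃ w ∈ A, A = interval G v w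

/-- A graph is antipodal if every vertex `v` has an antipode `w` with `V = [v,w]`. -/
def IsAntipodal {V : Type*} (G : SimpleGraph V) : Prop :=
  ∀ v : V, ∃ w : V, interval G v w = Set.univ

/-- A convex cycle: a cycle whose vertex set is convex. -/
def ConvexCycle {V : Type*} (G : SimpleGraph V) {a : V} (c : G.Walk a a) : Prop :=
  c.IsCycle ∧ GConvex G {v | v ∈ c.support}

/-- Bipartite mediangle graph: connected, bipartite, satisfying the Cycle Condition and
the Intersection of Convex Cycles condition. -/
def IsMediangle {V : Type*} (G : SimpleGraph V) : Prop :=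
  G.Connected ∧ G.Colorable 2 ∧
  (∀ u x y z : V, G.Adj z x → G.Adj z y → x ≠ y →
    G.dist u x + 1 = G.dist u z → G.dist u y + 1 = G.dist u z →
    ∃ c : G.Walk z z, ConvexCycle G c ∧ s(z, x) ∈ c.edges ∧ s(z, y) ∈ c.edges ∧
      c.getVert (c.length / 2) ∈ interval G u x ∩ interval G u y) ∧
  (∀ (a b : V) (c₁ : G.Walk a a) (c₂ : G.Walk b b),
    ConvexCycle G c₁ → ConvexCycle G c₂ →
    {v | v ∈ c₁.support} ≠ {v | v ∈ c₂.support} →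
    {e : Sym2 V | e ∈ c₁.edges ∧ e ∈ c₂.edges}.Subsingleton)

/-- A graph is apiculate if for every basepoint `u` and vertices `x, y` there is a unique
`⪯_u`-maximal vertex in `[u,x] ∩ [u,y]` (the `u`-apex relative to `x` and `y`). -/
def IsApiculate {V : Type*} (G : SimpleGraph V) : Prop :=
  ∀ u x y : V, ∃! a : V,
    a ∈ interval G u x ∩ interval G u y ∧
      ∀ b ∈ interval G u x ∩ interval G u y, a ∈ interval G u b → a = b

/-- The hypercube graph on the finite subsets of `U`: two finite subsets are adjacent iff
their symmetric difference has exactly one element. -/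
def cubeGraph (U : Type) : SimpleGraph (Finset U) where
  Adj A B := ∃ e : U, symmDiff (A : Set U) (B : Set U) = {e}
  symm := by
    constructor
    rintro A B ⟨e, h⟩
    exact ⟨e, by rwa [symmDiff_comm]⟩
  loopless := by
    constructor
    rintro A ⟨e, h⟩
    rw [symmDiff_self] at h
    exact Set.singleton_ne_empty e (h.symm.trans Set.bot_eq_empty)

/-- A partial cube: a connected graph admitting an isometric embedding into a hypercube. -/
def IsPartialCube {V : Type*} (G : SimpleGraph V) : Prop :=
  G.Connected ∧ ∃ (U : Type) (φ : V → Finset U),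
    ∀ u v : V, (cubeGraph U).dist (φ u) (φ v) = G.dist u v

/-! ### Sign vectors, COMs and OMs -/

/-- Sign vectors on a ground set `U`. -/
abbrev SignVec (U : Type*) := U → SignType

/-- Composition of sign vectors. -/
def sComp {U : Type*} (X Y : SignVec U) : SignVec U :=
  fun e => if X e ≠ 0 then X e else Y e

/-- Separator of two sign vectors. -/
def sep {U : Type*} (X Y : SignVec U) : Set U := {e | X e * Y e = -1}

/-- A Complex of Oriented Matroids: a system of sign vectors satisfying strong elimination
(SE) and face symmetry (FS). -/
structure IsCOM {U : Type*} (L : Set (SignVec U)) : Prop where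
  se : ∀ X ∈ L, ∀ Y ∈ L, ∀ e ∈ sep X Y,
        ∃ Z ∈ L, Z e = 0 ∧ ∀ f ∉ sep X Y, Z f = sComp X Y f
  fs : ∀ X ∈ L, ∀ Y ∈ L, sComp X (-Y) ∈ L

/-- A system of sign vectors is simple if every sign occurs in every coordinate. -/
def SimpleSys {U : Type*} (L : Set (SignVec U)) : Prop :=
  ∀ (e : U) (s : SignType), ∃ X ∈ L, X e = s

/-- The topes of a simple system: covectors with full support. -/
def topes {U : Type*} (L : Set (SignVec U)) : Set (SignVec U) :=
  {X ∈ L | ∀ e, X e ≠ 0}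

/-- The tope graph: vertices the topes, two topes adjacent iff their separator is a
singleton. -/
def topeGraph {U : Type*} (L : Set (SignVec U)) : SimpleGraph (topes L) where
  Adj X Y := ∃ e : U, sep X.1 Y.1 = {e}
  symm := by
    constructor
    rintro X Y ⟨e, h⟩
    refine ⟨e, ?_⟩
    rw [← h]
    ext f
    simp only [sep, Set.mem_setOf_eq, mul_comm]
  loopless := by
    constructor
    rintro ⟨X, hX⟩ ⟨e, h⟩
    have he : X e * X e = -1 := by
      have : e ∈ sep X X := by rw [h]; exact Set.mem_singleton e
      exact this
    cases hxe : X e <;> rw [hxe] at he <;> exact absurd he (by decide)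

/-- An oriented matroid: a COM containing the zero sign vector. -/
def IsOM {U : Type*} (L : Set (SignVec U)) : Prop :=
  IsCOM L ∧ (0 : SignVec U) ∈ L

/-- The partial order on sign vectors determined coordinatewise by `0 < -1` and `0 < +1`. -/
def signLE {U : Type*} (X Y : SignVec U) : Prop :=
  ∀ e, X e = 0 ∨ X e = Y e

/-- `L` contains a strict chain with `n + 1` elements (i.e., of length `n`). -/
def HasChainOfLength {U : Type*} (L : Set (SignVec U)) (n : ℕ) : Prop :=
  ∃ c : Fin (n + 1) → SignVec U, (∀ i, c i ∈ L) ∧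
    ∀ i j : Fin (n + 1), i < j → signLE (c i) (c j) ∧ c i ≠ c j

/-- `L` has rank `r`: the longest chain in `(L, ≤)` has length `r`. -/
def HasRank {U : Type*} (L : Set (SignVec U)) (r : ℕ) : Prop :=
  HasChainOfLength L r ∧ ∀ n : ℕ, HasChainOfLength L n → n ≤ r

/-- A simplicial oriented matroid: an OM of rank `r` in which every tope has degree exactly
`r` in the tope graph. -/
def IsSimplicialOM {U : Type*} (L : Set (SignVec U)) : Prop :=
  IsOM L ∧ ∃ r : ℕ, HasRank L r ∧
    ∀ T ∈ topes L, {Y ∈ topes L | ∃ e : U, sep T Y = {e}}.ncard = r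

/-- The imprint of a vertex `u` in a set `A`. -/
def imprint {V : Type*} (G : SimpleGraph V) (u : V) (A : Set V) : Set V :=
  {x ∈ A | interval G u x ∩ A = {x}}

end Mediangle

/-!
Embed `G` isometrically into a hypercube, translated so that the vertex `v ∈ A` nearest to a
given `u` goes to `∅`. Then `A = [v, v̄]` consists of the vertices whose image lies below that of
`v̄`, and `v` is a gate of `u` exactly when the image of `u` is disjoint from those of `A`.
Induct along a geodesic from `v` to `u`: if `v` is the gate of the neighbour `u'` of `u` but not
of `u`, the coordinate `e` flipped by the edge `u'u` occurs in the image of some vertex of `A`.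
Such a vertex `x` closest to `v`, together with the antipode in `A` of its predecessor on a
geodesic to `v`, gives two vertices of `A` whose images meet exactly in `{e}`. Their apex with
respect to `u'` lies above both `u` and `v`, so its image is `{e}`: it is a vertex of `A` closer to
`u` than `v`.
-/

open scoped symmDiff
open Finset

namespace Mediangle

section Hypercube

variable {U : Type*} [DecidableEq U]

lemma card_symmDiff_add_two_mul_card_inter (s t : Finset U) :
    #(s ∆ t) + 2 * #(s ∩ t) = #s + #t := by
  rw [symmDiff_def, sup_eq_union, card_union_of_disjoint disjoint_sdiff_sdiff,
    ← card_sdiff_add_card_inter s t, ← card_sdiff_add_card_inter t s, inter_comm t s]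
  ring

lemma card_symmDiff_add_card_symmDiff (p z q : Finset U) :
    #(p ∆ z) + #(z ∆ q) = #(p ∆ q) + 2 * #((p ∆ z) ∩ (z ∆ q)) := by
  rw [← card_symmDiff_add_two_mul_card_inter, symmDiff_assoc, symmDiff_symmDiff_cancel_left]

lemma card_symmDiff_add_card_symmDiff_eq_iff {p z q : Finset U} :
    #(p ∆ z) + #(z ∆ q) = #(p ∆ q) ↔ p ∩ q ⊆ z ∧ z ⊆ p ∪ q := by
  rw [card_symmDiff_add_card_symmDiff, add_eq_left, mul_eq_zero, card_eq_zero,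
    eq_empty_iff_forall_notMem]
  simp only [OfNat.ofNat_ne_zero, false_or, subset_iff, mem_inter, mem_symmDiff, mem_union]
  grind

end Hypercube

section CubeGraph

variable {U : Type} [DecidableEq U]

lemma cubeGraph_adj_iff {s t : Finset U} : (cubeGraph U).Adj s t ↔ #(s ∆ t) = 1 := by
  simp only [cubeGraph, card_eq_one, ← coe_symmDiff, coe_eq_singleton]

lemma exists_walk_cubeGraph_length_eq (D : Finset U) :
    ∀ s t : Finset U, s ∆ t = D → ∃ w : (cubeGraph U).Walk s t, w.length = #D := by
  induction D using Finset.induction_on with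
  | empty =>
    intro s t h
    obtain rfl := symmDiff_eq_bot.mp h
    exact ⟨.nil, rfl⟩
  | insert a D ha ih =>
    intro s t h
    have hadj : (cubeGraph U).Adj s (s ∆ {a}) := by
      rw [cubeGraph_adj_iff, symmDiff_symmDiff_cancel_left, card_singleton]
    have hD : (s ∆ {a}) ∆ t = D := by
      rw [symmDiff_right_comm, h, insert_eq, ← sup_eq_union,
        ← (disjoint_singleton_left.mpr ha).symmDiff_eq_sup,
        symmDiff_symmDiff_self']
    obtain ⟨w, hw⟩ := ih _ _ hD
    exact ⟨.cons hadj w, by rw [Walk.length_cons, hw, card_insert_of_notMem ha]⟩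

lemma card_symmDiff_le_length {s t : Finset U} (w : (cubeGraph U).Walk s t) :
    #(s ∆ t) ≤ w.length := by
  induction w with
  | nil => simp
  | @cons s r t h w ih =>
    have := card_symmDiff_add_card_symmDiff s r t
    rw [Walk.length_cons, cubeGraph_adj_iff.mp h] at *
    omega

lemma cubeGraph_dist (s t : Finset U) : (cubeGraph U).dist s t = #(s ∆ t) := by
  obtain ⟨w, hw⟩ := exists_walk_cubeGraph_length_eq _ s t rfl
  obtain ⟨p, hp⟩ := w.reachable.exists_walk_length_eq_dist
  exact le_antisymm (hw ▸ dist_le w) (hp ▸ card_symmDiff_le_length p)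

end CubeGraph

section Interval

variable {V : Type*} {G : SimpleGraph V}

lemma left_mem_interval (p q : V) : p ∈ interval G p q := by
  simp [interval]

lemma right_mem_interval (p q : V) : q ∈ interval G p q := by
  simp [interval]

lemma interval_subset_interval (hc : G.Connected) {p q w : V} (hw : w ∈ interval G p q) :
    interval G p w ⊆ interval G p q := by
  intro z hz
  have h₁ : G.dist p q ≤ G.dist p z + G.dist z q := hc.dist_triangle
  have h₂ : G.dist z q ≤ G.dist z w + G.dist w q := hc.dist_triangle
  simp only [interval, Set.mem_ofPred_eq] at *
  omega

lemma exists_adj_mem_interval (hc : G.Connected) {p q : V} (hpq : p ≠ q) :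
    ∃ r, G.Adj p r ∧ r ∈ interval G p q := by
  obtain ⟨w, hw⟩ := hc.exists_walk_length_eq_dist p q
  cases w with
  | nil => exact absurd rfl hpq
  | @cons _ r _ hpr w =>
    refine ⟨r, hpr, ?_⟩
    have h₁ : G.dist p q ≤ G.dist p r + G.dist r q := hc.dist_triangle
    have h₂ : G.dist r q ≤ w.length := dist_le w
    rw [Walk.length_cons] at hw
    simp only [interval, Set.mem_ofPred_eq, dist_eq_one_iff_adj.mpr hpr] at *
    omega

lemma IsApiculate.exists_apex (hc : G.Connected) (hap : IsApiculate G) (p x y : V) :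
    ∃ a ∈ interval G p x ∩ interval G p y,
      ∀ b ∈ interval G p x ∩ interval G p y, b ∈ interval G p a := by
  obtain ⟨a, ha, huniq⟩ := hap p x y
  refine ⟨a, ha.1, fun b hb => ?_⟩
  -- `dist p` is bounded by `dist p x` on `[p, x]`, so some `c ⪰ b` is farthest from `p`.
  obtain ⟨c, ⟨hcI, hbc⟩, hcmax⟩ := (measure fun c => G.dist p x - G.dist p c).wf.has_min
    {c | c ∈ interval G p x ∩ interval G p y ∧ b ∈ interval G p c} ⟨b, hb, right_mem_interval p b⟩
  suffices c = a from this ▸ hbc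
  refine huniq c ⟨hcI, fun d hdI hcd => ?_⟩
  have hd : ¬ G.dist p x - G.dist p d < G.dist p x - G.dist p c :=
    hcmax d ⟨hdI, interval_subset_interval hc hcd hbc⟩
  have hdx := hdI.1
  simp only [interval, Set.mem_ofPred_eq] at hdx hcd
  exact hc.dist_eq_zero_iff.mp (by omega)

end Interval

/-- Unlike in `IsGated`, the gate `g` is not required to lie in `A`. -/
def IsGate {V : Type*} (G : SimpleGraph V) (A : Set V) (u g : V) : Prop :=
  ∀ z ∈ A, g ∈ interval G u z

section IsometricEmbedding

variable {V : Type*} {G : SimpleGraph V} {U : Type*} [DecidableEq U] {φ : V → Finset U}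
  (hφ : ∀ p q, G.dist p q = #(φ p ∆ φ q))
include hφ

lemma mem_interval_iff_of_dist_eq_card {p q z : V} :
    z ∈ interval G p q ↔ φ p ∩ φ q ⊆ φ z ∧ φ z ⊆ φ p ∪ φ q := by
  simp only [interval, Set.mem_ofPred_eq, hφ]
  exact card_symmDiff_add_card_symmDiff_eq_iff

variable {v : V} (hv : φ v = ∅)
include hv

lemma mem_interval_iff_subset {w z : V} : z ∈ interval G v w ↔ φ z ⊆ φ w := by
  simp [mem_interval_iff_of_dist_eq_card hφ, hv]

lemma mem_interval_iff_disjoint {p q : V} : v ∈ interval G p q ↔ Disjoint (φ p) (φ q) := by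
  simp [mem_interval_iff_of_dist_eq_card hφ, hv, disjoint_iff_inter_eq_empty]

lemma eq_sdiff_of_interval_eq {w y y' : V} (h : interval G v w = interval G y y') :
    φ y' = φ w \ φ y := by
  have hvy : Disjoint (φ y) (φ y') :=
    (mem_interval_iff_disjoint hφ hv).mp (h ▸ left_mem_interval v w)
  have hwy : φ w ⊆ φ y ∪ φ y' :=
    ((mem_interval_iff_of_dist_eq_card hφ).mp (h ▸ right_mem_interval v w)).2
  have hy'w : φ y' ⊆ φ w := (mem_interval_iff_subset hφ hv).mp (h ▸ right_mem_interval y y')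
  ext a
  simp only [mem_sdiff]
  grind [Finset.disjoint_left]

lemma exists_inter_eq_singleton (hc : G.Connected) {w : V}
    (hant : IsAntipodalSet G (interval G v w)) {e : U} {x : V} (hx : x ∈ interval G v w)
    (he : e ∈ φ x) : ∃ x ∈ interval G v w, ∃ y ∈ interval G v w, φ x ∩ φ y = {e} := by
  induction hn : #(φ x) using Nat.strong_induction_on generalizing x with
  | _ n ih =>
  have hxv : x ≠ v := by rintro rfl; simp [hv] at he
  obtain ⟨r, hxr, hr⟩ := exists_adj_mem_interval hc hxv
  have hrx : φ r ⊆ φ x := by simpa [hv] using ((mem_interval_iff_of_dist_eq_card hφ).mp hr).2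
  have hxr1 : #(φ x \ φ r) = 1 := by
    rw [← symmDiff_of_ge hrx, ← hφ, dist_eq_one_iff_adj.mpr hxr]
  have hrA : r ∈ interval G v w := (mem_interval_iff_subset hφ hv).mpr
    (hrx.trans ((mem_interval_iff_subset hφ hv).mp hx))
  by_cases her : e ∈ φ r
  · have := card_sdiff_add_card_eq_card hrx
    exact ih #(φ r) (by omega) hrA her rfl
  obtain ⟨r', -, hA⟩ := hant r hrA
  refine ⟨x, hx, r', hA ▸ right_mem_interval r r', ?_⟩
  obtain ⟨e', he'⟩ := card_eq_one.mp hxr1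
  have hee' : e ∈ φ x \ φ r := mem_sdiff.mpr ⟨he, her⟩
  rw [he', mem_singleton] at hee'
  rw [eq_sdiff_of_interval_eq hφ hv hA, ← inter_sdiff_assoc,
    inter_eq_left.mpr ((mem_interval_iff_subset hφ hv).mp hx), he', hee']

lemma exists_eq_singleton_of_isApiculate (hc : G.Connected) (hap : IsApiculate G)
    {u u' x y : V} {e : U} (hu : φ u = insert e (φ u')) (hx : Disjoint (φ u') (φ x))
    (hy : Disjoint (φ u') (φ y)) (hxy : φ x ∩ φ y = {e}) : ∃ a, φ a = {e} := by
  obtain ⟨a, ⟨hax, hay⟩, hapex⟩ := hap.exists_apex hc u' x y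
  have he : e ∈ φ x ∩ φ y := hxy ▸ mem_singleton_self e
  have hmem : ∀ z, e ∈ φ z → Disjoint (φ u') (φ z) →
      u ∈ interval G u' z ∧ v ∈ interval G u' z := by
    intro z hez hz
    rw [mem_interval_iff_of_dist_eq_card hφ, mem_interval_iff_disjoint hφ hv, hu]
    grind
  have hua := hapex u ⟨(hmem x (mem_inter.mp he).1 hx).1, (hmem y (mem_inter.mp he).2 hy).1⟩
  have hva := hapex v ⟨(hmem x (mem_inter.mp he).1 hx).2, (hmem y (mem_inter.mp he).2 hy).2⟩
  rw [mem_interval_iff_of_dist_eq_card hφ] at hua hax hay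
  rw [mem_interval_iff_disjoint hφ hv] at hva
  have heu' : e ∉ φ u' := disjoint_right.mp hx (mem_inter.mp he).1
  refine ⟨a, eq_singleton_iff_unique_mem.mpr ⟨?_, fun b hb => ?_⟩⟩
  · exact (mem_union.mp (hua.2 (hu ▸ mem_insert_self e (φ u')))).resolve_left heu'
  · have hbu' : b ∉ φ u' := disjoint_right.mp hva hb
    have hbxy : b ∈ φ x ∩ φ y :=
      mem_inter.mpr ⟨by simpa [hbu'] using hax.2 hb, by simpa [hbu'] using hay.2 hb⟩
    simpa [hxy] using hbxy

lemma isGate_of_adj (hc : G.Connected) (hap : IsApiculate G) {w : V}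
    (hant : IsAntipodalSet G (interval G v w)) {u u' : V}
    (hnear : ∀ z ∈ interval G v w, G.dist u v ≤ G.dist u z) (huu' : G.Adj u u')
    (hu' : u' ∈ interval G u v) (hgate : IsGate G (interval G v w) u' v) :
    IsGate G (interval G v w) u v := by
  simp only [IsGate, mem_interval_iff_disjoint hφ hv] at hgate ⊢
  have hsub : φ u' ⊆ φ u := by simpa [hv] using ((mem_interval_iff_of_dist_eq_card hφ).mp hu').2
  obtain ⟨e, he⟩ : ∃ e, φ u \ φ u' = {e} := card_eq_one.mp <| by
    rw [← symmDiff_of_ge hsub, ← hφ, dist_eq_one_iff_adj.mpr huu']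
  have heu' : e ∉ φ u' := (mem_sdiff.mp (he ▸ mem_singleton_self e)).2
  have hu : φ u = insert e (φ u') := by
    rw [← sdiff_union_of_subset hsub, he, insert_eq]
  intro z hz
  by_contra hdisj
  have hez : e ∈ φ z := by
    obtain ⟨b, hbu, hbz⟩ := not_disjoint_iff.mp hdisj
    rw [hu, mem_insert] at hbu
    exact hbu.resolve_right (disjoint_right.mp (hgate z hz) hbz) ▸ hbz
  obtain ⟨x, hx, y, hy, hxy⟩ := exists_inter_eq_singleton hφ hv hc hant hz hez
  obtain ⟨a, ha⟩ :=
    exists_eq_singleton_of_isApiculate hφ hv hc hap hu (hgate x hx) (hgate y hy) hxy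
  have haA : a ∈ interval G v w := by
    rw [mem_interval_iff_subset hφ hv, ha, singleton_subset_iff]
    exact (mem_interval_iff_subset hφ hv).mp hx (mem_inter.mp (hxy ▸ mem_singleton_self e)).1
  have hdv : G.dist u v = #(φ u') + 1 := by
    rw [hφ, hv, ← bot_eq_empty, symmDiff_bot, hu, card_insert_of_notMem heu']
  have hda : G.dist u a = #(φ u') := by
    rw [hφ, ha, hu, symmDiff_of_ge (singleton_subset_iff.mpr (mem_insert_self e _)),
      sdiff_singleton_eq_erase, erase_insert heu']
  have := hnear a haA
  omega

lemma isGate_of_forall_dist_le (hc : G.Connected) (hap : IsApiculate G) {w : V}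
    (hant : IsAntipodalSet G (interval G v w)) {u : V}
    (hnear : ∀ z ∈ interval G v w, G.dist u v ≤ G.dist u z) : IsGate G (interval G v w) u v := by
  induction hn : G.dist u v generalizing u with
  | zero =>
    obtain rfl := hc.dist_eq_zero_iff.mp hn
    exact fun z _ => left_mem_interval u z
  | succ n ih =>
    obtain ⟨u', huu', hu'⟩ := exists_adj_mem_interval hc (by rintro rfl; simp at hn : u ≠ v)
    have hu'v : G.dist u' v = n := by
      simp only [interval, Set.mem_ofPred_eq, dist_eq_one_iff_adj.mpr huu'] at hu'
      omega
    refine isGate_of_adj hφ hv hc hap hant hnear huu' hu' (ih (fun z hz => ?_) hu'v)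
    have := hnear z hz
    have : G.dist u z ≤ G.dist u u' + G.dist u' z := hc.dist_triangle
    rw [dist_eq_one_iff_adj.mpr huu'] at this
    omega

end IsometricEmbedding

/-- In an apiculate partial cube, every (nonempty) antipodal subgraph is
gated: if every `v ∈ A` has an antipode `v̄` with `A = [v, v̄]`, then every vertex `u` has a
gate `u' ∈ A` with `u' ∈ [u, v]` for all `v ∈ A`. -/
theorem antipodal_isGated_of_apiculate {V : Type*} (G : SimpleGraph V)
    (hpc : IsPartialCube G) (hap : IsApiculate G)
    (A : Set V) (hA : A.Nonempty) (hant : IsAntipodalSet G A) :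
    IsGated G A := by
  classical
  obtain ⟨hc, U, φ, hφ⟩ := hpc
  intro u
  obtain ⟨v, hvA, hv⟩ := (measure (G.dist u)).wf.has_min A hA
  obtain ⟨w, -, rfl⟩ := hant v hvA
  have hψ : ∀ p q, G.dist p q = #((φ p ∆ φ v) ∆ (φ q ∆ φ v)) := fun p q => by
    rw [symmDiff_symmDiff_symmDiff_comm, symmDiff_self, symmDiff_bot, ← hφ, cubeGraph_dist]
  exact ⟨v, hvA, isGate_of_forall_dist_le hψ (symmDiff_self _) hc hap hant
    fun z hz => not_lt.mp (hv z hz)⟩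

end Mediangle
end

section
/- If a system of sign vectors (U,L) satisfies the strong elimination axiom (SE) and the face symmetry axiom (FS), then L is closed under composition: for all X,Y ∈ L, the composition X∘Y belongs to L. -/
open SimpleGraph

namespace Mediangle

theorem sComp_neg_sComp_neg {U : Type*} (X Y : SignVec U) :
    sComp X (-sComp X (-Y)) = sComp X Y := by
  funext e
  by_cases he : X e = 0 <;> simp [sComp, he]

theorem closed_under_composition_of_SE_FS_general {U : Type*} (L : Set (SignVec U))
    (hfs : ∀ X ∈ L, ∀ Y ∈ L, sComp X (-Y) ∈ L) :
    ∀ X ∈ L, ∀ Y ∈ L, sComp X Y ∈ L := by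
  intro X hX Y hY
  simpa only [sComp_neg_sComp_neg] using hfs X hX _ (hfs X hX Y hY)

/-- If a system of sign vectors satisfies (SE) and (FS), then it is closed
under composition. -/
theorem closed_under_composition_of_SE_FS {U : Type*} (L : Set (SignVec U))
    (hse : ∀ X ∈ L, ∀ Y ∈ L, ∀ e ∈ sep X Y,
      ∃ Z ∈ L, Z e = 0 ∧ ∀ f ∉ sep X Y, Z f = sComp X Y f)
    (hfs : ∀ X ∈ L, ∀ Y ∈ L, sComp X (-Y) ∈ L) :
    ∀ X ∈ L, ∀ Y ∈ L, sComp X Y ∈ L :=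
  closed_under_composition_of_SE_FS_general L hfs

end Mediangle
end
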